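/- arXiv:1508.07181 — 3 statements merged into one kernel-verified Lean document; each statement's English description precedes it below -/
import Mathlib

section
/- The Cartesian product of two connected directed hypergraphs is connected, and conversely, if the Cartesian product of two directed hypergraphs is connected then both factors are connected. -/
structure DiHypergraph (V : Type) where
  arcs : Set (Set V × Set V)
  tail_nonempty : ∀ e ∈ arcs, (Prod.fst e).Nonempty
  head_nonempty : ∀ e ∈ arcs, (Prod.snd e).Nonempty

namespace DiHypergraph

variable {V V1 V2 V3 : Type}

/-- The set of vertices of an arc. -/
def verts (e : Set V × Set V) : Set V := e.1 ∪ e.2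

/-- Cartesian product of directed hypergraphs. -/
def prod (H1 : DiHypergraph V1) (H2 : DiHypergraph V2) : DiHypergraph (V1 × V2) where
  arcs := {e | (∃ x : V1, ∃ f ∈ H2.arcs,
                 e = ((fun y => (x, y)) '' f.1, (fun y => (x, y)) '' f.2)) ∨
               (∃ y : V2, ∃ f ∈ H1.arcs,
                 e = ((fun x => (x, y)) '' f.1, (fun x => (x, y)) '' f.2))}
  tail_nonempty := by
    rintro e (⟨x, f, hf, rfl⟩ | ⟨y, f, hf, rfl⟩)
    · exact (H2.tail_nonempty f hf).image _
    · exact (H1.tail_nonempty f hf).image _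
  head_nonempty := by
    rintro e (⟨x, f, hf, rfl⟩ | ⟨y, f, hf, rfl⟩)
    · exact (H2.head_nonempty f hf).image _
    · exact (H1.head_nonempty f hf).image _

/-- Two vertices are weakly adjacent if they lie in a common arc. -/
def adj (H : DiHypergraph V) (x y : V) : Prop :=
  ∃ e ∈ H.arcs, x ∈ verts e ∧ y ∈ verts e

/-- Weak connectivity: any two vertices joined by a weak path. -/
def Connected (H : DiHypergraph V) : Prop :=
  Nonempty V ∧ ∀ x y : V, Relation.ReflTransGen H.adj x y

/-- `φ` is an isomorphism of directed hypergraphs. -/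
def IsIsoVia (H1 : DiHypergraph V1) (H2 : DiHypergraph V2) (φ : V1 ≃ V2) : Prop :=
  ∀ t h : Set V1, (t, h) ∈ H1.arcs ↔ (φ '' t, φ '' h) ∈ H2.arcs

/-- Isomorphy of directed hypergraphs. -/
def Iso (H1 : DiHypergraph V1) (H2 : DiHypergraph V2) : Prop :=
  ∃ φ : V1 ≃ V2, IsIsoVia H1 H2 φ

/-- Cartesian product of a family of directed hypergraphs. -/
def piProd {I : Type} {Vf : I → Type} (Hf : ∀ i, DiHypergraph (Vf i)) :
    DiHypergraph (∀ i, Vf i) where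
  arcs := {e | ∃ (i : I) (f : Set (Vf i) × Set (Vf i)), f ∈ (Hf i).arcs ∧ ∃ base : ∀ j, Vf j,
      e.1 = {v | v i ∈ f.1 ∧ ∀ j, j ≠ i → v j = base j} ∧
      e.2 = {v | v i ∈ f.2 ∧ ∀ j, j ≠ i → v j = base j}}
  tail_nonempty := by
    classical
    rintro e ⟨i, f, hf, base, h1, h2⟩
    obtain ⟨x, hx⟩ := (Hf i).tail_nonempty f hf
    refine ⟨Function.update base i x, ?_⟩
    rw [h1]
    exact ⟨by simpa using hx, fun j hj => Function.update_of_ne hj _ _⟩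
  head_nonempty := by
    classical
    rintro e ⟨i, f, hf, base, h1, h2⟩
    obtain ⟨x, hx⟩ := (Hf i).head_nonempty f hf
    refine ⟨Function.update base i x, ?_⟩
    rw [h2]
    exact ⟨by simpa using hx, fun j hj => Function.update_of_ne hj _ _⟩

/-- The 2-section of a directed hypergraph. -/
def twoSection (H : DiHypergraph V) : SimpleGraph V where
  Adj x y := x ≠ y ∧ ∃ e ∈ H.arcs, x ∈ verts e ∧ y ∈ verts e
  symm := ⟨by rintro x y ⟨hxy, e, he, hx, hy⟩; exact ⟨hxy.symm, e, he, hy, hx⟩⟩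
  loopless := ⟨fun x h => h.1 rfl⟩

/-- Cartesian product of a family of simple graphs. -/
def piGraph {I : Type} {Vf : I → Type} (Gf : ∀ i, SimpleGraph (Vf i)) :
    SimpleGraph (∀ i, Vf i) where
  Adj x y := ∃ i, (Gf i).Adj (x i) (y i) ∧ ∀ j, j ≠ i → x j = y j
  symm := ⟨by rintro x y ⟨i, h, hj⟩; exact ⟨i, h.symm, fun j hji => (hj j hji).symm⟩⟩
  loopless := ⟨by rintro x ⟨i, h, -⟩; exact (Gf i).loopless.irrefl _ h⟩

/-- All vertices of the arc `e` agree in every coordinate except possibly `i`. -/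
def diffOnly {I : Type} {l : I → ℕ} (Υ : V ≃ ∀ i, Fin (l i)) (e : Set V × Set V) (i : I) :
    Prop :=
  ∀ x ∈ verts e, ∀ y ∈ verts e, ∀ j, j ≠ i → Υ x j = Υ y j

/-- Cyclic increment of the `i`-th coordinate of a vertex. -/
def incV {I : Type} [DecidableEq I] {l : I → ℕ} [∀ i, NeZero (l i)]
    (Υ : V ≃ ∀ i, Fin (l i)) (i : I) (v : V) : V :=
  Υ.symm (Function.update (Υ v) i (Υ v i + 1))

/-- Increment of an arc. -/
def incArc {I : Type} [DecidableEq I] {l : I → ℕ} [∀ i, NeZero (l i)]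
    (Υ : V ≃ ∀ i, Fin (l i)) (i : I) (e : Set V × Set V) : Set V × Set V :=
  (incV Υ i '' e.1, incV Υ i '' e.2)

/-- A pre-coordinatization: a coordinatization of the 2-section. -/
def IsPreCoord {I : Type} {l : I → ℕ} (H : DiHypergraph V) (Υ : V ≃ ∀ i, Fin (l i)) : Prop :=
  ∃ Gf : ∀ i, SimpleGraph (Fin (l i)),
    ∀ x y : V, (twoSection H).Adj x y ↔ (piGraph Gf).Adj (Υ x) (Υ y)

/-- A coordinatization: an isomorphism to a Cartesian product of directed hypergraphs. -/
def IsCoord {I : Type} {l : I → ℕ} (H : DiHypergraph V)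
    (Υ : V ≃ ∀ i, Fin (l i)) : Prop :=
  ∃ Hf : ∀ i, DiHypergraph (Fin (l i)), IsIsoVia H (piProd Hf) Υ

/-- A directed hypergraph is prime w.r.t. the Cartesian product. -/
def IsPrime (H : DiHypergraph V) : Prop :=
  (∃ x y : V, x ≠ y) ∧
  ¬ ∃ (α β : Type) (H1 : DiHypergraph α) (H2 : DiHypergraph β),
      (∃ a a' : α, a ≠ a') ∧ (∃ b b' : β, b ≠ b') ∧ Iso H (H1.prod H2)

/-- The rank of a directed hypergraph. -/
noncomputable def rank (H : DiHypergraph V) : ℕ :=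
  sSup ((fun e => (verts e).ncard) '' H.arcs)

/-- The one-vertex hypergraph without arcs. -/
def unitHG : DiHypergraph Unit where
  arcs := ∅
  tail_nonempty := by simp
  head_nonempty := by simp

end DiHypergraph

/-- A simple graph is prime w.r.t. the Cartesian graph product. -/
def SimpleGraph.IsPrimeCart {α : Type} (G : SimpleGraph α) : Prop :=
  (∃ x y : α, x ≠ y) ∧
  ¬ ∃ (β γ : Type) (G1 : SimpleGraph β) (G2 : SimpleGraph γ),
      (∃ b b' : β, b ≠ b') ∧ (∃ c c' : γ, c ≠ c') ∧ Nonempty (G ≃g G1.boxProd G2)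

/-!
An arc of `H1 □ H2` is a copy of an arc of one factor with the other coordinate frozen, so two
vertices of the product are weakly adjacent iff they agree in one coordinate and are weakly
adjacent in the other. Hence weak paths in a factor lift to any layer of the product, and
projecting a weak path of the product gives weak paths of the factors.
-/

namespace DiHypergraph

open Relation

variable {V V1 V2 : Type}

lemma verts_image {W : Type} (φ : V → W) (e : Set V × Set V) :
    verts (φ '' e.1, φ '' e.2) = φ '' verts e :=
  (Set.image_union φ e.1 e.2).symm

variable (H1 : DiHypergraph V1) (H2 : DiHypergraph V2)

lemma prod_adj_iff {a c : V1} {b d : V2} :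
    (H1.prod H2).adj (a, b) (c, d) ↔ H1.adj a c ∧ b = d ∨ a = c ∧ H2.adj b d := by
  constructor
  · rintro ⟨e, ⟨x, f, hf, rfl⟩ | ⟨y, f, hf, rfl⟩, hp, hq⟩ <;>
      rw [verts_image] at hp hq <;> obtain ⟨_, hp, hpe⟩ := hp <;> obtain ⟨_, hq, hqe⟩ := hq <;>
      simp only [Prod.mk.injEq] at hpe hqe
    · exact Or.inr ⟨hpe.1.symm.trans hqe.1, f, hf, hpe.2 ▸ hp, hqe.2 ▸ hq⟩
    · exact Or.inl ⟨⟨f, hf, hpe.1 ▸ hp, hqe.1 ▸ hq⟩, hpe.2.symm.trans hqe.2⟩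
  · rintro (⟨⟨f, hf, ha, hc⟩, rfl⟩ | ⟨rfl, ⟨f, hf, hb, hd⟩⟩)
    · refine ⟨_, Or.inr ⟨b, f, hf, rfl⟩, ?_, ?_⟩ <;> rw [verts_image]
      exacts [⟨a, ha, rfl⟩, ⟨c, hc, rfl⟩]
    · refine ⟨_, Or.inl ⟨a, f, hf, rfl⟩, ?_, ?_⟩ <;> rw [verts_image]
      exacts [⟨b, hb, rfl⟩, ⟨d, hd, rfl⟩]

lemma reflTransGen_prod_adj_left {a c : V1} (b : V2) (h : ReflTransGen H1.adj a c) :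
    ReflTransGen (H1.prod H2).adj (a, b) (c, b) :=
  h.lift (·, b) fun _ _ hac => (prod_adj_iff H1 H2).2 (Or.inl ⟨hac, rfl⟩)

lemma reflTransGen_prod_adj_right (a : V1) {b d : V2} (h : ReflTransGen H2.adj b d) :
    ReflTransGen (H1.prod H2).adj (a, b) (a, d) :=
  h.lift (a, ·) fun _ _ hbd => (prod_adj_iff H1 H2).2 (Or.inr ⟨rfl, hbd⟩)

lemma reflTransGen_adj_fst {p q : V1 × V2} (h : ReflTransGen (H1.prod H2).adj p q) :
    ReflTransGen H1.adj p.1 q.1 := by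
  refine h.lift' Prod.fst fun ⟨a, b⟩ ⟨c, d⟩ hpq => ?_
  rcases (prod_adj_iff H1 H2).1 hpq with ⟨hac, -⟩ | ⟨rfl, -⟩
  exacts [.single hac, .refl]

lemma reflTransGen_adj_snd {p q : V1 × V2} (h : ReflTransGen (H1.prod H2).adj p q) :
    ReflTransGen H2.adj p.2 q.2 := by
  refine h.lift' Prod.snd fun ⟨a, b⟩ ⟨c, d⟩ hpq => ?_
  rcases (prod_adj_iff H1 H2).1 hpq with ⟨-, rfl⟩ | ⟨-, hbd⟩
  exacts [.refl, .single hbd]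

end DiHypergraph

open DiHypergraph in
theorem connected_prod_iff {V1 V2 : Type} (H1 : DiHypergraph V1) (H2 : DiHypergraph V2) :
    (H1.prod H2).Connected ↔ H1.Connected ∧ H2.Connected := by
  constructor
  · rintro ⟨⟨a, b⟩, hconn⟩
    exact ⟨⟨⟨a⟩, fun x y => reflTransGen_adj_fst H1 H2 (hconn (x, b) (y, b))⟩,
      ⟨⟨b⟩, fun x y => reflTransGen_adj_snd H1 H2 (hconn (a, x) (a, y))⟩⟩
  · rintro ⟨⟨⟨a⟩, h1⟩, ⟨⟨b⟩, h2⟩⟩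
    refine ⟨⟨(a, b)⟩, fun ⟨a, b⟩ ⟨c, d⟩ => ?_⟩
    exact (reflTransGen_prod_adj_left H1 H2 b (h1 a c)).trans
      (reflTransGen_prod_adj_right H1 H2 c (h2 b d))
end

section
/- Let H=(V,E) be a directed hypergraph whose 2-section factors as [H]_2 = □_{i=1}^k G_i into k nontrivial factors, let n=|V| and m=|E|. Then for every fixed l∈ℕ_0 there is a constant C (depending only on l) with k^l · log(m) ≤ C·n. -/
theorem mul_two_pow_card_le_two_mul_prod {I : Type} [Fintype I] {f : I → ℕ}
    (hf : ∀ i, 2 ≤ f i) (i : I) : f i * 2 ^ Fintype.card I ≤ 2 * ∏ j, f j := by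
  classical
  have hcard : ({i}ᶜ : Finset I).card + 1 = Fintype.card I := by
    rw [Finset.card_compl, Finset.card_singleton]
    have := Fintype.card_pos_iff.mpr ⟨i⟩
    omega
  have hrest : 2 ^ ({i}ᶜ : Finset I).card ≤ ∏ j ∈ {i}ᶜ, f j :=
    Finset.pow_card_le_prod _ _ _ fun j _ => hf j
  calc f i * 2 ^ Fintype.card I = 2 * (f i * 2 ^ ({i}ᶜ : Finset I).card) := by
        rw [← hcard, pow_succ]; ring
    _ ≤ 2 * (f i * ∏ j ∈ {i}ᶜ, f j) := by gcongr
    _ = 2 * ∏ j, f j := by rw [← Fintype.prod_eq_mul_prod_compl]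

namespace DiHypergraph

section PiGraph

variable {I : Type} {Vf : I → Type} {Gf : ∀ i, SimpleGraph (Vf i)}

theorem piGraph.eq_of_adj_of_ne {x y : ∀ i, Vf i} (hxy : (piGraph Gf).Adj x y) {i : I}
    (hi : x i ≠ y i) : ∀ j, j ≠ i → x j = y j := by
  obtain ⟨a, -, hagree⟩ := hxy
  obtain rfl : a = i := by_contra fun hai => hi (hagree i (Ne.symm hai))
  exact hagree

/-- Two distinct members `x, y` of a clique fix the coordinate `i` where they differ: a third
member agreeing with `x` at `i` differs from `y` there, so it is adjacent to `y` along `i`. -/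
theorem piGraph.exists_coord_of_isClique [Nonempty I] {S : Set (∀ i, Vf i)}
    (hS : (piGraph Gf).IsClique S) : ∃ i, ∀ x ∈ S, ∀ y ∈ S, ∀ j, j ≠ i → x j = y j := by
  by_cases hsub : S.Subsingleton
  · exact ⟨Classical.arbitrary I, fun x hx y hy _ _ => by rw [hsub hx hy]⟩
  obtain ⟨x, hx, y, hy, hxy⟩ := Set.not_subsingleton_iff.mp hsub
  obtain ⟨i, hi⟩ := Function.ne_iff.mp hxy
  have hyx := piGraph.eq_of_adj_of_ne (hS hx hy hxy) hi
  have toX : ∀ z ∈ S, ∀ j, j ≠ i → z j = x j := by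
    intro z hz j hj
    by_cases hzi : z i = x i
    · have hzy : z i ≠ y i := hzi ▸ hi
      rw [piGraph.eq_of_adj_of_ne (hS hz hy (ne_of_apply_ne (· i) hzy)) hzy j hj, hyx j hj]
    · exact piGraph.eq_of_adj_of_ne (hS hz hx (ne_of_apply_ne (· i) hzi)) hzi j hj
  exact ⟨i, fun z hz w hw j hj => (toX z hz j hj).trans (toX w hw j hj).symm⟩

end PiGraph

variable {V : Type}

theorem isClique_verts {H : DiHypergraph V} {e : Set V × Set V} (he : e ∈ H.arcs) :
    (twoSection H).IsClique (verts e) :=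
  fun _ hx _ hy hxy => ⟨hxy, e, he, hx, hy⟩

theorem exists_diffOnly {I : Type} [Nonempty I] {l : I → ℕ} {H : DiHypergraph V}
    {Gf : ∀ i, SimpleGraph (Fin (l i))} (g : twoSection H ≃g piGraph Gf)
    {e : Set V × Set V} (he : e ∈ H.arcs) : ∃ i, diffOnly g.toEquiv e i := by
  have hclique : (piGraph Gf).IsClique (g '' verts e) := by
    rintro _ ⟨x, hx, rfl⟩ _ ⟨y, hy, rfl⟩ hxy
    exact g.map_adj_iff.mpr (isClique_verts he hx hy (ne_of_apply_ne g hxy))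
  obtain ⟨i, hi⟩ := piGraph.exists_coord_of_isClique hclique
  exact ⟨i, fun x hx y hy => hi (g x) ⟨x, hx, rfl⟩ (g y) ⟨y, hy, rfl⟩⟩

section Counting

variable {I : Type} {l : I → ℕ} (Υ : V ≃ ∀ i, Fin (l i))

def layer (i : I) (v : V) : Set V :=
  {x | ∀ j, j ≠ i → Υ x j = Υ v j}

theorem injOn_layer (i : I) (v : V) : Set.InjOn (fun x => Υ x i) (layer Υ i v) := by
  intro x hx y hy hxy
  apply Υ.injective
  funext j
  by_cases hj : j = i
  · subst hj
    exact hxy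
  · rw [hx j hj, hy j hj]

theorem verts_subset_layer {e : Set V × Set V} {i : I} {v : V} (he : diffOnly Υ e i)
    (hv : v ∈ verts e) : verts e ⊆ layer Υ i v :=
  fun x hx j hj => he x hx v hv j hj

theorem ncard_arcs_le_card_mul_sum [Fintype V] [Fintype I] (H : DiHypergraph V)
    (hH : ∀ e ∈ H.arcs, ∃ i, diffOnly Υ e i) :
    H.arcs.ncard ≤ Fintype.card V * ∑ i, 4 ^ l i := by
  have hlayer : ∀ e : H.arcs, ∃ i v, diffOnly Υ e i ∧ v ∈ verts e.1 := by
    rintro ⟨e, he⟩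
    obtain ⟨i, hi⟩ := hH e he
    obtain ⟨v, hv⟩ := H.tail_nonempty e he
    exact ⟨i, v, hi, Or.inl hv⟩
  choose dir base hdir hbase using hlayer
  let encode : H.arcs → V × Σ i, Set (Fin (l i)) × Set (Fin (l i)) := fun e =>
    (base e, ⟨dir e, (fun x => Υ x (dir e)) '' e.1.1, (fun x => Υ x (dir e)) '' e.1.2⟩)
  let decode : (V × Σ i, Set (Fin (l i)) × Set (Fin (l i))) → Set V × Set V := fun c =>
    ((fun x => Υ x c.2.1) ⁻¹' c.2.2.1 ∩ layer Υ c.2.1 c.1,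
      (fun x => Υ x c.2.1) ⁻¹' c.2.2.2 ∩ layer Υ c.2.1 c.1)
  have hdecode : ∀ e, decode (encode e) = e.1 := by
    intro e
    have hsub := verts_subset_layer Υ (hdir e) (hbase e)
    exact Prod.ext
      ((injOn_layer Υ _ _).preimage_image_inter (Set.subset_union_left.trans hsub))
      ((injOn_layer Υ _ _).preimage_image_inter (Set.subset_union_right.trans hsub))
  have hinj : Function.Injective encode :=
    fun e₁ e₂ h => Subtype.ext <| by rw [← hdecode e₁, ← hdecode e₂, h]
  calc H.arcs.ncard = Nat.card H.arcs := (Nat.card_coe_set_eq _).symm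
    _ ≤ Nat.card (V × Σ i, Set (Fin (l i)) × Set (Fin (l i))) :=
      Nat.card_le_card_of_injective encode hinj
    _ = Fintype.card V * ∑ i, 4 ^ l i := by
      simp [Nat.card_eq_fintype_card, Fintype.card_set, ← mul_pow]

end Counting

theorem ncard_arcs_le_four_pow [Fintype V] (H : DiHypergraph V) :
    H.arcs.ncard ≤ 4 ^ Fintype.card V :=
  calc H.arcs.ncard ≤ Nat.card (Set V × Set V) := Set.ncard_le_card _
    _ = 4 ^ Fintype.card V := by simp [Nat.card_eq_fintype_card, Fintype.card_set, ← mul_pow]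

section Iso

variable {V I : Type} [Fintype V] [Fintype I] {l : I → ℕ} {G : SimpleGraph V}
  {Gf : ∀ i, SimpleGraph (Fin (l i))}

theorem card_eq_prod_of_iso_piGraph (g : G ≃g piGraph Gf) : Fintype.card V = ∏ i, l i := by
  classical
  simp [Fintype.card_congr g.toEquiv]

theorem two_pow_card_le_card_of_iso_piGraph (g : G ≃g piGraph Gf) (hl : ∀ i, 2 ≤ l i) :
    2 ^ Fintype.card I ≤ Fintype.card V :=
  card_eq_prod_of_iso_piGraph g ▸ Finset.pow_card_le_prod _ _ _ fun i _ => hl i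

end Iso

theorem ncard_arcs_le_of_iso_piGraph {V I : Type} [Fintype V] [Fintype I] {l : I → ℕ}
    {H : DiHypergraph V} {Gf : ∀ i, SimpleGraph (Fin (l i))}
    (g : twoSection H ≃g piGraph Gf) (hl : ∀ i, 2 ≤ l i) :
    H.arcs.ncard ≤
      Fintype.card V ^ 2 * 4 ^ (2 * Fintype.card V / 2 ^ Fintype.card I) := by
  have hV := card_eq_prod_of_iso_piGraph g
  rcases isEmpty_or_nonempty I with hI | hI
  · have hV1 : Fintype.card V = 1 := by simp [hV]
    simpa [hV1] using (ncard_arcs_le_four_pow H).trans (by rw [hV1]; norm_num)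
  have hIV : Fintype.card I ≤ Fintype.card V :=
    Nat.lt_two_pow_self.le.trans (two_pow_card_le_card_of_iso_piGraph g hl)
  have hlN : ∀ i, l i ≤ 2 * Fintype.card V / 2 ^ Fintype.card I := fun i =>
    (Nat.le_div_iff_mul_le (by positivity)).mpr (hV ▸ mul_two_pow_card_le_two_mul_prod hl i)
  calc H.arcs.ncard ≤ Fintype.card V * ∑ i, 4 ^ l i :=
        ncard_arcs_le_card_mul_sum g.toEquiv H fun e he => exists_diffOnly g he
    _ ≤ Fintype.card V * (Fintype.card I * 4 ^ (2 * Fintype.card V / 2 ^ Fintype.card I)) := by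
        gcongr
        exact Finset.sum_le_card_nsmul _ _ _ fun i _ => Nat.pow_le_pow_right (by norm_num) (hlN i)
    _ ≤ Fintype.card V * (Fintype.card V * 4 ^ (2 * Fintype.card V / 2 ^ Fintype.card I)) := by
        gcongr
    _ = _ := by ring

end DiHypergraph

open Real

theorem Real.log_le_two_mul_sqrt {x : ℝ} (hx : 0 ≤ x) : log x ≤ 2 * √x := by
  rw [sqrt_eq_rpow]
  linarith [log_le_rpow_div hx one_half_pos]

theorem exists_pow_le_mul_sqrt_two_pow (l : ℕ) :
    ∃ D : ℝ, 0 < D ∧ ∀ k : ℕ, (k : ℝ) ^ l ≤ D * √2 ^ k := by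
  obtain ⟨D, hD⟩ := (tendsto_pow_const_div_const_pow_of_one_lt l one_lt_sqrt_two).bddAbove_range
  refine ⟨max D 1, by positivity, fun k => ?_⟩
  have hk : (k : ℝ) ^ l / √2 ^ k ≤ D := hD ⟨k, rfl⟩
  rw [div_le_iff₀ (by positivity)] at hk
  exact hk.trans (by gcongr; exact le_max_left D 1)

theorem sqrt_two_pow_mul_log_le {k n m : ℕ} (hkn : 2 ^ k ≤ n)
    (hm : m ≤ n ^ 2 * 4 ^ (2 * n / 2 ^ k)) : √2 ^ k * log m ≤ 10 * n := by
  set N := 2 * n / 2 ^ k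
  set t := √2 ^ k with ht
  have ht2 : t ^ 2 = 2 ^ k := by
    rw [ht, ← pow_mul, mul_comm, pow_mul, sq_sqrt zero_le_two]
  have ht1 : 1 ≤ t := one_le_pow₀ one_lt_sqrt_two.le
  have hn : (2 : ℝ) ^ k ≤ n := by exact_mod_cast hkn
  have hn0 : (0 : ℝ) < n := lt_of_lt_of_le (by positivity) hn
  have htn : t ≤ √n := (le_sqrt (by positivity) hn0.le).mpr (ht2 ▸ hn)
  have hN : (N : ℝ) * 2 ^ k ≤ 2 * n := by exact_mod_cast Nat.div_mul_le_self (2 * n) (2 ^ k)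
  have hlog4 : log 4 ≤ 3 := by linarith [log_le_sub_one_of_pos (show (0 : ℝ) < 4 by norm_num)]
  rcases Nat.eq_zero_or_pos m with rfl | hm0
  · simp
  have hlogm : log m ≤ 2 * log n + N * log 4 := by
    calc log m ≤ log ((n : ℝ) ^ 2 * 4 ^ N) :=
          log_le_log (by exact_mod_cast hm0) (by exact_mod_cast hm)
      _ = 2 * log n + N * log 4 := by
          rw [log_mul (by positivity) (by positivity), log_pow, log_pow]; push_cast; ring
  have hlogn : t * log n ≤ 2 * n := by
    calc t * log n ≤ √n * (2 * √n) :=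
          mul_le_mul htn (log_le_two_mul_sqrt hn0.le) (log_natCast_nonneg n) (sqrt_nonneg _)
      _ = 2 * n := by rw [mul_left_comm, mul_self_sqrt hn0.le]
  have hlogN : t * (N * log 4) ≤ 6 * n := by
    calc t * (N * log 4) ≤ t ^ 2 * (N * 3) :=
          mul_le_mul (by nlinarith) (by gcongr) (by positivity) (by positivity)
      _ ≤ 6 * n := by rw [ht2]; linarith
  calc t * log m ≤ t * (2 * log n + N * log 4) := by gcongr
    _ = 2 * (t * log n) + t * (N * log 4) := by ring
    _ ≤ 10 * n := by linarith

open DiHypergraph in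
theorem k_pow_log_bound (l : ℕ) :
    ∃ C : ℝ, 0 < C ∧ ∀ (V : Type) [Fintype V] (H : DiHypergraph V) (k : ℕ)
      (nf : Fin k → ℕ) (Gf : ∀ i, SimpleGraph (Fin (nf i))),
      (∀ i, 2 ≤ nf i) →
      Nonempty (twoSection H ≃g piGraph Gf) →
      (k : ℝ) ^ l * Real.log (H.arcs.ncard) ≤ C * (Fintype.card V) := by
  obtain ⟨D, hD, hDk⟩ := exists_pow_le_mul_sqrt_two_pow l
  refine ⟨10 * D, by positivity, fun V _ H k nf Gf hnf ⟨g⟩ => ?_⟩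
  have hkn := two_pow_card_le_card_of_iso_piGraph g hnf
  have hm := ncard_arcs_le_of_iso_piGraph g hnf
  rw [Fintype.card_fin] at hkn hm
  calc (k : ℝ) ^ l * log H.arcs.ncard ≤ D * √2 ^ k * log H.arcs.ncard :=
        mul_le_mul_of_nonneg_right (hDk k) (log_natCast_nonneg _)
    _ ≤ D * (10 * Fintype.card V) := by
        rw [mul_assoc]
        exact mul_le_mul_of_nonneg_left (sqrt_two_pow_mul_log_le hkn hm) hD.le
    _ = 10 * D * Fintype.card V := by ring
end

section
/- Let H be a directed hypergraph with a pre-coordinatization Υ coming from the prime factorization of [H]_2 into factors indexed by I, and suppose H ≅ □_{j∈J} H_j is any factorization of H. Then there is a partition {I_j}_{j∈J} of I such that [H_j]_2 ≅ □_{i∈I_j} G_i for each j∈J, where □_{i∈I} G_i is the prime factorization of [H]_2. -/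
/-!
Passing to 2-sections turns `H ≅ □_j H_j` into a second factorization
`Φ : □_i G_i ≅ □_j [H_j]_2` of the connected graph `[H]_2`. Layers of a Cartesian product are
geodesically convex and `Φ` preserves geodesics, so `Φ` maps every `G_i`-layer onto a set closed
under exchanging single coordinates. Such a set is the box product of its coordinate projections;
as `G_i` is prime, all but one projection is trivial, i.e. the layer lies in one `[H_j]_2`-layer,
for `j = P i`. Conversely, the preimage of the `[H_j]_2`-layer through `Φ b` is exchange-closed
and contains the `G_i`-layers through `b` with `P i = j`; as vertices of a connected product differ
in finitely many coordinates, it is exactly the subproduct over `P⁻¹ j` through `b`.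
-/

theorem SimpleGraph.Iso.dist_eq {V W : Type} {G : SimpleGraph V} {G' : SimpleGraph W}
    (e : G ≃g G') {u v : V} (h : G.Reachable u v) : G'.dist (e u) (e v) = G.dist u v := by
  apply le_antisymm
  · obtain ⟨p, hp⟩ := h.exists_walk_length_eq_dist
    simpa [hp] using SimpleGraph.dist_le (p.map e.toHom)
  · obtain ⟨p, hp⟩ := (h.map e.toHom).exists_walk_length_eq_dist
    simpa [hp] using SimpleGraph.dist_le (p.map e.symm.toHom)

theorem SimpleGraph.IsPrimeCart.subsingleton_or_subsingleton {α β γ : Type}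
    {G : SimpleGraph α} {G1 : SimpleGraph β} {G2 : SimpleGraph γ} (hG : G.IsPrimeCart)
    (e : G ≃g G1.boxProd G2) : Subsingleton β ∨ Subsingleton γ := by
  by_contra! h
  exact hG.2 ⟨β, γ, G1, G2, h.1.exists_pair_ne, h.2.exists_pair_ne, ⟨e⟩⟩

namespace DiHypergraph.piGraph

open SimpleGraph Function

section

variable {K : Type} {Uf : K → Type} {Rf : ∀ k, SimpleGraph (Uf k)}

def layer (k : K) (c : ∀ k, Uf k) : Set (∀ k, Uf k) := {z | ∀ k' ≠ k, z k' = c k'}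

def subLayer (p : K → Prop) (c : ∀ k, Uf k) : Set (∀ k, Uf k) :=
  {z | ∀ k, ¬ p k → z k = c k}

lemma layer_eq_of_mem {k : K} {c x : ∀ k, Uf k} (hx : x ∈ layer k c) :
    layer k x = layer k c := by
  ext z
  exact forall₂_congr fun k' hk' => by rw [hx k' hk']

lemma eq_of_mem_layer_of_mem_layer {k k' : K} {c z : ∀ k, Uf k} (hkk' : k ≠ k')
    (hz : z ∈ layer k c) (hz' : z ∈ layer k' c) : z = c := by
  funext l
  by_cases hl : l = k
  · exact hz' l (hl ▸ hkk')
  · exact hz l hl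

variable [DecidableEq K]

def UpdateClosed (S : Set (∀ k, Uf k)) : Prop :=
  ∀ x ∈ S, ∀ y ∈ S, ∀ k, update x k (y k) ∈ S

lemma update_mem_layer (k : K) (c : ∀ k, Uf k) (t : Uf k) : update c k t ∈ layer k c :=
  fun _ hk' => update_of_ne hk' _ _

lemma update_self_of_mem_layer {k : K} {c x : ∀ k, Uf k} (hx : x ∈ layer k c) :
    update c k (x k) = x := by
  funext l
  by_cases hl : l = k
  · subst hl; simp
  · rw [update_of_ne hl, hx l hl]

lemma adj_update_iff {c : ∀ k, Uf k} {k : K} {t t' : Uf k} :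
    (piGraph Rf).Adj (update c k t) (update c k t') ↔ (Rf k).Adj t t' := by
  constructor
  · rintro ⟨l, hadj, -⟩
    by_cases hl : l = k
    · subst hl; simpa using hadj
    · simp [update_of_ne hl] at hadj
  · exact fun h => ⟨k, by simpa using h, fun l hl => by simp [update_of_ne hl]⟩

def layerIso (k : K) (c : ∀ k, Uf k) : Rf k ≃g (piGraph Rf).induce (layer k c) where
  toFun t := ⟨update c k t, update_mem_layer k c t⟩
  invFun z := z.1 k
  left_inv t := by simp
  right_inv z := Subtype.ext (update_self_of_mem_layer z.2)
  map_rel_iff' := adj_update_iff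

def subLayerIso (p : K → Prop) [DecidablePred p] (c : ∀ k, Uf k) :
    piGraph (fun k : {k // p k} => Rf k) ≃g (piGraph Rf).induce (subLayer p c) where
  toFun x := ⟨fun k => if h : p k then x ⟨k, h⟩ else c k, fun k hk => dif_neg hk⟩
  invFun z k := z.1 k
  left_inv x := by funext k; simp [k.2]
  right_inv z := Subtype.ext <| funext fun k => by
    by_cases h : p k
    · simp [h]
    · simp [h, z.2 k h]
  map_rel_iff' := by
    intro x y
    simp only [Equiv.coe_fn_mk, comap_adj, Function.Embedding.coe_subtype]
    constructor
    · rintro ⟨k, hadj, hoth⟩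
      by_cases hk : p k
      · refine ⟨⟨k, hk⟩, by simpa [hk] using hadj, fun l hl => ?_⟩
        simpa [l.2] using hoth l (fun h => hl (Subtype.ext h))
      · simp [hk] at hadj
    · rintro ⟨k, hadj, hoth⟩
      refine ⟨k, by simpa [k.2] using hadj, fun l hl => ?_⟩
      by_cases h : p l
      · simpa [h] using hoth ⟨l, h⟩ (fun h' => hl (congrArg Subtype.val h'))
      · simp [h]

lemma exists_factor_walk_add_walk_update {u v : ∀ k, Uf k} (W : (piGraph Rf).Walk u v) (k : K) :
    ∃ (p : (Rf k).Walk (u k) (v k)) (W' : (piGraph Rf).Walk (update u k (v k)) v),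
      p.length + W'.length = W.length := by
  induction W with
  | nil => exact ⟨.nil, Walk.nil.copy (update_eq_self _ _).symm rfl, by simp⟩
  | @cons u x v h W ih =>
    obtain ⟨l, hadj, hoth⟩ := id h
    obtain ⟨p, W', hlen⟩ := ih
    by_cases hl : l = k
    · subst hl
      refine ⟨.cons hadj p, W'.copy ?_ rfl, ?_⟩
      · have hx : x ∈ layer l u := fun l' hl' => (hoth l' hl').symm
        rw [← update_self_of_mem_layer hx, update_idem]
      · simp only [Walk.length_cons, Walk.length_copy]; omega
    · have hux : u k = x k := hoth k (Ne.symm hl)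
      have hadj' : (piGraph Rf).Adj (update u k (v k)) (update x k (v k)) := by
        refine ⟨l, by simpa [update_of_ne hl] using hadj, fun l' hl' => ?_⟩
        by_cases hl'k : l' = k
        · subst hl'k; simp
        · simp [update_of_ne hl'k, hoth l' hl']
      exact ⟨p.copy hux.symm rfl, .cons hadj' W', by
        simp only [Walk.length_cons, Walk.length_copy]; omega⟩

lemma exists_walk_to_update {k : K} {a b : Uf k} (p : (Rf k).Walk a b) (u : ∀ k, Uf k)
    (hu : u k = a) : ∃ W : (piGraph Rf).Walk u (update u k b), W.length = p.length := by
  induction p generalizing u with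
  | nil => exact ⟨Walk.nil.copy rfl (by rw [← hu, update_eq_self]), by simp⟩
  | @cons a a' b hadj p ih =>
    obtain ⟨W, hW⟩ := ih (update u k a') (by simp)
    have hadj' : (piGraph Rf).Adj u (update u k a') :=
      ⟨k, by simpa [hu] using hadj, fun l hl => (update_of_ne hl _ _).symm⟩
    exact ⟨.cons hadj' (W.copy rfl (by rw [update_idem])), by
      simp only [Walk.length_cons, Walk.length_copy, hW]⟩

lemma finite_setOf_ne_of_reachable {u v : ∀ k, Uf k} (h : (piGraph Rf).Reachable u v) :
    {k | u k ≠ v k}.Finite := by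
  obtain ⟨W⟩ := h
  induction W with
  | nil => simp
  | @cons u x v h W ih =>
    obtain ⟨l, -, hoth⟩ := h
    refine (ih.insert l).subset fun k hk => ?_
    by_cases hkl : k = l
    · exact Or.inl hkl
    · exact Or.inr (by simpa [hoth k hkl] using hk)

lemma dist_update_add_dist_le {x y : ∀ k, Uf k} (h : (piGraph Rf).Reachable x y) (k : K) :
    (piGraph Rf).dist x (update x k (y k)) + (piGraph Rf).dist (update x k (y k)) y ≤
      (piGraph Rf).dist x y := by
  obtain ⟨W, hW⟩ := h.exists_walk_length_eq_dist
  obtain ⟨p, W', hlen⟩ := exists_factor_walk_add_walk_update W k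
  obtain ⟨W₁, hW₁⟩ := exists_walk_to_update p x rfl
  calc _ ≤ W₁.length + W'.length := add_le_add (dist_le W₁) (dist_le W')
    _ = _ := by rw [hW₁, hlen, hW]

lemma exists_factor_walk_length_lt_of_not_mem_layer {k : K} {u v : ∀ k, Uf k}
    (W : (piGraph Rf).Walk u v)
    (hW : ∃ w ∈ W.support, w ∉ layer k u) :
    ∃ p : (Rf k).Walk (u k) (v k), p.length < W.length := by
  induction W with
  | nil => simp_all [layer]
  | @cons u x v h W ih =>
    obtain ⟨l, hadj, hoth⟩ := id h
    by_cases hl : l = k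
    · subst hl
      have hx : x ∈ layer l u := fun l' hl' => (hoth l' hl').symm
      obtain ⟨w, hw, hwu⟩ := hW
      rw [Walk.support_cons, List.mem_cons] at hw
      rcases hw with rfl | hw
      · exact absurd (fun _ _ => rfl) hwu
      obtain ⟨p, hp⟩ := ih ⟨w, hw, by rwa [layer_eq_of_mem hx]⟩
      exact ⟨.cons hadj p, by simpa using hp⟩
    · obtain ⟨p, W', hp⟩ := exists_factor_walk_add_walk_update W k
      exact ⟨p.copy (hoth k (Ne.symm hl)).symm rfl, by
        simp only [Walk.length_cons, Walk.length_copy]; omega⟩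

lemma mem_layer_of_dist_add_dist_le {k : K} {c u v w : ∀ k, Uf k}
    (hu : u ∈ layer k c) (hv : v ∈ layer k c) (huw : (piGraph Rf).Reachable u w)
    (hwv : (piGraph Rf).Reachable w v)
    (h : (piGraph Rf).dist u w + (piGraph Rf).dist w v ≤ (piGraph Rf).dist u v) :
    w ∈ layer k c := by
  rw [← layer_eq_of_mem hu] at hv ⊢
  by_contra hw
  obtain ⟨W₁, hW₁⟩ := huw.exists_walk_length_eq_dist
  obtain ⟨W₂, hW₂⟩ := hwv.exists_walk_length_eq_dist
  obtain ⟨p, hp⟩ := exists_factor_walk_length_lt_of_not_mem_layer (W₁.append W₂)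
    ⟨w, (Walk.mem_support_append_iff _ _).mpr (Or.inl W₁.end_mem_support), hw⟩
  obtain ⟨W, hW⟩ := exists_walk_to_update p u rfl
  have := dist_le (W.copy rfl (update_self_of_mem_layer hv))
  rw [Walk.length_copy, hW] at this
  rw [Walk.length_append, hW₁, hW₂] at hp
  omega

lemma adj_iff_boxProd_adj (k : K) {x y : ∀ k, Uf k} :
    (piGraph Rf).Adj x y ↔
      ((Rf k).Adj (x k) (y k) ∧
          (fun l : {l // l ≠ k} => x l) = fun l : {l // l ≠ k} => y l) ∨
        ((piGraph fun l : {l // l ≠ k} => Rf l).Adj (fun l => x l) (fun l => y l) ∧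
          x k = y k) := by
  constructor
  · rintro ⟨l, hadj, hoth⟩
    by_cases hl : l = k
    · subst hl
      exact Or.inl ⟨hadj, funext fun l' => hoth l' l'.2⟩
    · exact Or.inr ⟨⟨⟨l, hl⟩, hadj, fun l' hl' => hoth l' fun h => hl' (Subtype.ext h)⟩,
        hoth k (Ne.symm hl)⟩
  · rintro (⟨hadj, heq⟩ | ⟨⟨⟨l, hl⟩, hadj, hoth⟩, heq⟩)
    · exact ⟨k, hadj, fun l hl => congrFun heq ⟨l, hl⟩⟩
    · refine ⟨l, hadj, fun l' hl' => ?_⟩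
      by_cases hl'k : l' = k
      · exact hl'k ▸ heq
      · exact hoth ⟨l', hl'k⟩ fun h => hl' (congrArg Subtype.val h)

noncomputable def UpdateClosed.boxProdIso {S : Set (∀ k, Uf k)} (hS : UpdateClosed S) (k : K) :
    (piGraph Rf).induce S ≃g
      ((Rf k).induce ((· k) '' S)).boxProd
        ((piGraph fun l : {l // l ≠ k} => Rf l).induce ((fun x (l : {l // l ≠ k}) => x l) '' S))
    where
  toEquiv := Equiv.ofBijective
    (fun z => (⟨z.1 k, z.1, z.2, rfl⟩, ⟨fun (l : {l // l ≠ k}) => z.1 l, z.1, z.2, rfl⟩))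
    ⟨by
      rintro ⟨x, hx⟩ ⟨y, hy⟩ h
      have hk : x k = y k := congrArg (fun p => p.1.1) h
      have hl : (fun l : {l // l ≠ k} => x l) = fun l : {l // l ≠ k} => y l :=
        congrArg (fun p => p.2.1) h
      refine Subtype.ext (funext fun l => ?_)
      by_cases hlk : l = k
      · exact hlk ▸ hk
      · exact congrFun hl ⟨l, hlk⟩,
    by
      rintro ⟨⟨_, x, hx, rfl⟩, ⟨_, y, hy, rfl⟩⟩
      refine ⟨⟨update y k (x k), hS y hy x hx k⟩, ?_⟩
      refine Prod.ext (Subtype.ext ?_) (Subtype.ext (funext fun l => ?_))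
      · simp
      · simp [update_of_ne l.2]⟩
  map_rel_iff' := by
    rintro ⟨x, hx⟩ ⟨y, hy⟩
    simp only [boxProd_adj, comap_adj, Function.Embedding.coe_subtype, Subtype.ext_iff]
    exact (adj_iff_boxProd_adj k).symm

lemma UpdateClosed.subset_layer_of_isPrimeCart {α : Type} {G : SimpleGraph α}
    {S : Set (∀ k, Uf k)} (hS : UpdateClosed S) (hG : G.IsPrimeCart)
    (e : G ≃g (piGraph Rf).induce S) {k : K} {x y : ∀ k, Uf k} (hx : x ∈ S) (hy : y ∈ S)
    (hxy : x k ≠ y k) : S ⊆ layer k x := by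
  rcases hG.subsingleton_or_subsingleton (e.trans (hS.boxProdIso (Rf := Rf) k)) with h | h
  · exact absurd (congrArg Subtype.val (Subsingleton.elim (α := (· k) '' S)
      ⟨x k, x, hx, rfl⟩ ⟨y k, y, hy, rfl⟩)) hxy
  · intro z hz l hl
    have := Subsingleton.elim (α := (fun x (l : {l // l ≠ k}) => x l.1) '' S)
      ⟨_, z, hz, rfl⟩ ⟨_, x, hx, rfl⟩
    exact congrFun (congrArg Subtype.val this) ⟨l, hl⟩

lemma updateClosed_image_layer {K' : Type} {Uf' : K' → Type} {Rf' : ∀ k, SimpleGraph (Uf' k)}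
    [DecidableEq K'] (e : piGraph Rf ≃g piGraph Rf') (hpre : (piGraph Rf).Preconnected)
    (k : K) (c : ∀ k, Uf k) : UpdateClosed (e '' layer k c) := by
  rintro _ ⟨u, hu, rfl⟩ _ ⟨v, hv, rfl⟩ k'
  set m := update (e u) k' (e v k')
  refine ⟨e.symm m, mem_layer_of_dist_add_dist_le hu hv (hpre _ _) (hpre _ _) ?_,
    e.apply_symm_apply m⟩
  calc _ = (piGraph Rf').dist (e u) m + (piGraph Rf').dist m (e v) := by
        rw [← e.dist_eq (hpre u _), ← e.dist_eq (hpre _ v), e.apply_symm_apply]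
    _ ≤ (piGraph Rf').dist (e u) (e v) := dist_update_add_dist_le ((hpre u v).map e.toHom) k'
    _ = _ := e.dist_eq (hpre u v)

lemma UpdateClosed.mem_of_mem_subLayer {S : Set (∀ k, Uf k)} (hS : UpdateClosed S)
    {p : K → Prop} {b x : ∀ k, Uf k} (hb : b ∈ S) (hlayer : ∀ k, p k → layer k b ⊆ S)
    (hx : x ∈ subLayer p b) (hfin : {k | x k ≠ b k}.Finite) : x ∈ S := by
  suffices ∀ D : Finset K, ∀ x ∈ subLayer p b, {k | x k ≠ b k} ⊆ D → x ∈ S from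
    this hfin.toFinset x hx (by simp)
  intro D
  induction D using Finset.induction_on with
  | empty =>
    intro x _ hD
    rwa [show x = b from funext fun k => not_not.mp fun hk => by simpa using hD hk]
  | @insert a D _ ih =>
    intro x hx hD
    have hx' : update x a (b a) ∈ S := by
      refine ih _ (fun k hk => ?_) fun k hk => ?_
      · by_cases hka : k = a
        · subst hka; simp
        · simpa [update_of_ne hka] using hx k hk
      · by_cases hka : k = a
        · subst hka; simp at hk
        · have := hD (by simpa [update_of_ne hka] using hk)
          exact (Finset.mem_insert.mp this).resolve_left hka
    by_cases hpa : p a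
    · simpa using hS _ hx' _ (hlayer a hpa (update_mem_layer a b (x a))) a
    · rwa [← hx a hpa, update_eq_self] at hx'

end

section

variable {I J : Type} {Vf : I → Type} {Wf : J → Type}
  {Gf : ∀ i, SimpleGraph (Vf i)} {Qf : ∀ j, SimpleGraph (Wf j)} [DecidableEq I] [DecidableEq J]

lemma image_layer_subset_layer_of_isPrimeCart (Φ : piGraph Gf ≃g piGraph Qf)
    (hpre : (piGraph Gf).Preconnected) {i : I} (hprime : (Gf i).IsPrimeCart) (c : ∀ i, Vf i) :
    ∃ j, Φ '' layer i c ⊆ layer j (Φ c) := by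
  obtain ⟨a, b, hab⟩ := hprime.1
  have hne : Φ (update c i a) ≠ Φ (update c i b) := fun h => hab <| by
    simpa using congrFun (Φ.injective h) i
  obtain ⟨j, hj⟩ := Function.ne_iff.mp hne
  refine ⟨j, ?_⟩
  have hsub := (updateClosed_image_layer Φ hpre i c).subset_layer_of_isPrimeCart hprime
    ((layerIso i c).trans (Φ.induce Φ.toEquiv.bijOn_image))
    (Set.mem_image_of_mem Φ (update_mem_layer i c a))
    (Set.mem_image_of_mem Φ (update_mem_layer i c b)) hj
  rwa [← layer_eq_of_mem (hsub (Set.mem_image_of_mem Φ fun _ _ => rfl))] at hsub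

lemma image_symm_layer_eq_subLayer (Φ : piGraph Gf ≃g piGraph Qf)
    (hpre : (piGraph Gf).Preconnected) {P : I → J} {b : ∀ i, Vf i}
    (hP : ∀ i, Φ '' layer i b ⊆ layer (P i) (Φ b)) (j : J) :
    Φ.symm '' layer j (Φ b) = subLayer (P · = j) b := by
  have hS := updateClosed_image_layer Φ.symm (Φ.preconnected_iff.mp hpre) j (Φ b)
  have hb : b ∈ Φ.symm '' layer j (Φ b) := ⟨Φ b, fun _ _ => rfl, Φ.symm_apply_apply b⟩
  ext x
  constructor
  · rintro hx i hi
    obtain ⟨z, hz, hzx⟩ := hS b hb x hx i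
    have hz' : Φ (update b i (x i)) = z := by rw [← hzx, Φ.apply_symm_apply]
    have := eq_of_mem_layer_of_mem_layer hi
      (hP i (Set.mem_image_of_mem Φ (update_mem_layer i b _))) (hz' ▸ hz)
    simpa using congrFun (Φ.injective this) i
  · refine fun hx => hS.mem_of_mem_subLayer hb (fun i hi y hy => ?_) hx
      (finite_setOf_ne_of_reachable (hpre x b))
    exact ⟨Φ y, hi ▸ hP i (Set.mem_image_of_mem Φ hy), Φ.symm_apply_apply y⟩

end

theorem exists_partition_of_isPrimeCart {I J : Type} {Vf : I → Type} {Wf : J → Type}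
    {Gf : ∀ i, SimpleGraph (Vf i)} {Qf : ∀ j, SimpleGraph (Wf j)}
    (Φ : piGraph Gf ≃g piGraph Qf)
    (hpre : (piGraph Gf).Preconnected) (hprime : ∀ i, (Gf i).IsPrimeCart)
    [Nonempty (∀ i, Vf i)] :
    ∃ P : I → J, ∀ j, Nonempty (Qf j ≃g piGraph fun i : {i // P i = j} => Gf i.1) := by
  classical
  obtain ⟨b⟩ := ‹Nonempty (∀ i, Vf i)›
  choose P hP using fun i => image_layer_subset_layer_of_isPrimeCart Φ hpre (hprime i) b
  refine ⟨P, fun j => ⟨?_⟩⟩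
  have hbij : Set.BijOn Φ.symm (layer j (Φ b)) (subLayer (P · = j) b) :=
    image_symm_layer_eq_subLayer Φ hpre hP j ▸ Φ.symm.toEquiv.bijOn_image
  exact (layerIso j (Φ b)).trans ((Φ.symm.induce hbij).trans (subLayerIso (P · = j) b).symm)

end DiHypergraph.piGraph

namespace DiHypergraph

variable {V V₁ V₂ : Type}

lemma twoSection_piProd {J : Type} {Wf : J → Type} (Hf : ∀ j, DiHypergraph (Wf j)) :
    twoSection (piProd Hf) = piGraph fun j => twoSection (Hf j) := by
  ext x y
  constructor
  · rintro ⟨hxy, e, ⟨j, f, hf, base, h1, h2⟩, hx, hy⟩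
    have mem : ∀ z ∈ verts e, z j ∈ verts f ∧ ∀ j' ≠ j, z j' = base j' := by
      rintro z (hz | hz)
      · rw [h1] at hz; exact ⟨Or.inl hz.1, hz.2⟩
      · rw [h2] at hz; exact ⟨Or.inr hz.1, hz.2⟩
    have hoth : ∀ j' ≠ j, x j' = y j' :=
      fun j' hj' => ((mem x hx).2 j' hj').trans ((mem y hy).2 j' hj').symm
    have hne : x j ≠ y j := fun h => hxy <| funext fun j' => by
      by_cases hj' : j' = j
      · exact hj' ▸ h
      · exact hoth j' hj'
    exact ⟨j, ⟨hne, f, hf, (mem x hx).1, (mem y hy).1⟩, hoth⟩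
  · rintro ⟨j, ⟨hne, f, hf, hxf, hyf⟩, hoth⟩
    refine ⟨fun h => hne (congrFun h j), ({v | v j ∈ f.1 ∧ ∀ j' ≠ j, v j' = x j'},
      {v | v j ∈ f.2 ∧ ∀ j' ≠ j, v j' = x j'}), ⟨j, f, hf, x, rfl, rfl⟩, ?_, ?_⟩
    · exact hxf.imp (⟨·, fun _ _ => rfl⟩) (⟨·, fun _ _ => rfl⟩)
    · have hyx : ∀ j' ≠ j, y j' = x j' := fun j' hj' => (hoth j' hj').symm
      exact hyf.imp (⟨·, hyx⟩) (⟨·, hyx⟩)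

lemma Connected.preconnected_twoSection {H : DiHypergraph V} (hconn : H.Connected) :
    (twoSection H).Preconnected := by
  intro x y
  induction hconn.2 x y with
  | refl => rfl
  | @tail b c _ hbc ih =>
    by_cases h : b = c
    · exact h ▸ ih
    · obtain ⟨e, he, hb, hc⟩ := hbc
      exact ih.trans (SimpleGraph.Adj.reachable ⟨h, e, he, hb, hc⟩)

namespace IsIsoVia

variable {H₁ : DiHypergraph V₁} {H₂ : DiHypergraph V₂} {φ : V₁ ≃ V₂}

lemma symm (hφ : IsIsoVia H₁ H₂ φ) : IsIsoVia H₂ H₁ φ.symm := fun t h => by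
  rw [hφ, Equiv.image_symm_image, Equiv.image_symm_image]

lemma twoSection_adj (hφ : IsIsoVia H₁ H₂ φ) {x y : V₁} (hxy : (twoSection H₁).Adj x y) :
    (twoSection H₂).Adj (φ x) (φ y) := by
  obtain ⟨hne, ⟨t, h⟩, he, hx, hy⟩ := hxy
  have mem : ∀ {z}, z ∈ verts (t, h) → φ z ∈ verts (φ '' t, φ '' h) :=
    fun hz => hz.imp (Set.mem_image_of_mem φ) (Set.mem_image_of_mem φ)
  exact ⟨φ.injective.ne hne, _, (hφ t h).mp he, mem hx, mem hy⟩

def twoSectionIso (hφ : IsIsoVia H₁ H₂ φ) : twoSection H₁ ≃g twoSection H₂ where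
  toEquiv := φ
  map_rel_iff' := ⟨fun h => by simpa using hφ.symm.twoSection_adj h, hφ.twoSection_adj⟩

end IsIsoVia

end DiHypergraph

open DiHypergraph in
theorem prime_graph_factors_partition_general {V I J : Type}
    {lG : I → ℕ} {Wf : J → Type}
    (H : DiHypergraph V) (hconn : H.Connected)
    (Gf : ∀ i, SimpleGraph (Fin (lG i))) (hGprime : ∀ i, (Gf i).IsPrimeCart)
    (Υ : V ≃ ∀ i, Fin (lG i))
    (hΥ : ∀ x y : V, (twoSection H).Adj x y ↔ (piGraph Gf).Adj (Υ x) (Υ y))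
    (Hf : ∀ j, DiHypergraph (Wf j)) (hfac : Iso H (piProd Hf)) :
    ∃ P : I → J, ∀ j : J,
      Nonempty (twoSection (Hf j) ≃g piGraph (fun i : {i : I // P i = j} => Gf i.1)) := by
  obtain ⟨φ, hφ⟩ := hfac
  let eΥ : twoSection H ≃g piGraph Gf := ⟨Υ, (hΥ _ _).symm⟩
  have Φ : piGraph Gf ≃g piGraph fun j => twoSection (Hf j) :=
    twoSection_piProd Hf ▸ eΥ.symm.trans hφ.twoSectionIso
  have : Nonempty (∀ i, Fin (lG i)) := ⟨Υ hconn.1.some⟩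
  exact piGraph.exists_partition_of_isPrimeCart Φ
    (eΥ.preconnected_iff.mp hconn.preconnected_twoSection) hGprime

open DiHypergraph in
theorem prime_graph_factors_partition {V I J : Type} [DecidableEq J]
    {lG : I → ℕ} {Wf : J → Type}
    (H : DiHypergraph V) (hconn : H.Connected)
    (Gf : ∀ i, SimpleGraph (Fin (lG i))) (hGprime : ∀ i, (Gf i).IsPrimeCart)
    (Υ : V ≃ ∀ i, Fin (lG i))
    (hΥ : ∀ x y : V, (twoSection H).Adj x y ↔ (piGraph Gf).Adj (Υ x) (Υ y))
    (Hf : ∀ j, DiHypergraph (Wf j)) (hfac : Iso H (piProd Hf)) :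
    ∃ P : I → J, ∀ j : J,
      Nonempty (twoSection (Hf j) ≃g piGraph (fun i : {i : I // P i = j} => Gf i.1)) :=
  prime_graph_factors_partition_general H hconn Gf hGprime Υ hΥ Hf hfac
end
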